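/- Let n ≥ 1 and let A be a real symmetric positive semidefinite (2n)×(2n) matrix, written in block form A = [[P, Q],[Qᵀ, R]] with n×n real blocks P, Q, R (P and R symmetric). Define the n×n complex matrix H = (1/4)(P + R + i(Q − Qᵀ)). Then H is Hermitian positive semidefinite and det H ≥ 2^{−n} (det A)^{1/2}; in particular det H is a nonnegative real number. -/

import Mathlib

/-!
Let `W = [[1, 1], [i, -i]]` (blocks of size `n`). Conjugating the complexified real Hessian `A`
by `W` gives a positive semidefinite matrix `Wᴴ A W` whose diagonal blocks are `4H` and its
complex conjugate `4H̄`, and `WᴴW = 2`, so `det (Wᴴ A W) = 4ⁿ det A`. Fischer's inequality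
`det [[X, Y], [Yᴴ, Z]] ≤ det X · det Z` for positive semidefinite block matrices then gives
`4ⁿ det A ≤ (4ⁿ det H)²`. Fischer's inequality is the Schur complement formula combined with the
monotonicity of the determinant on positive semidefinite matrices.
-/

open Matrix
open scoped ComplexOrder

namespace Matrix

variable {m l 𝕜 : Type*} [Fintype m] [DecidableEq m] [Fintype l] [DecidableEq l] [RCLike 𝕜]

open scoped MatrixOrder in
theorem PosSemidef.one_le_det_one_add {M : Matrix m m 𝕜} (hM : M.PosSemidef) :
    1 ≤ (1 + M).det := by
  have hH : (1 + M).IsHermitian := isHermitian_one.add hM.1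
  have h1 : algebraMap ℝ (Matrix m m 𝕜) 1 ≤ 1 + M := by
    rw [map_one]
    exact le_add_of_nonneg_right hM.nonneg
  rw [algebraMap_le_iff_le_spectrum hH.isSelfAdjoint] at h1
  rw [hH.det_eq_prod_eigenvalues]
  exact Finset.one_le_prod fun i _ ↦ by
    exact_mod_cast h1 _ (hH.eigenvalues_mem_spectrum_real i)

open scoped MatrixOrder in
theorem PosSemidef.det_le_det_add {S T : Matrix m m 𝕜} (hS : S.PosSemidef) (hT : T.PosSemidef) :
    S.det ≤ (S + T).det := by
  obtain hS0 | hS0 := eq_or_ne S.det 0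
  · exact hS0 ▸ (hS.add hT).det_nonneg
  obtain ⟨B, rfl⟩ := CStarAlgebra.nonneg_iff_eq_star_mul_self.mp hS.nonneg
  rw [star_eq_conjTranspose] at hS0 ⊢
  have hB : IsUnit B.det :=
    isUnit_of_mul_isUnit_right (by rw [← det_mul]; exact hS0.isUnit : IsUnit (Bᴴ.det * B.det))
  have hsplit : Bᴴ * B + T = Bᴴ * (1 + (B⁻¹)ᴴ * T * B⁻¹) * B := by
    rw [Matrix.mul_add, Matrix.add_mul, Matrix.mul_one, ← Matrix.mul_assoc, ← Matrix.mul_assoc,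
      ← conjTranspose_mul, nonsing_inv_mul _ hB, conjTranspose_one, Matrix.one_mul,
      Matrix.mul_assoc, nonsing_inv_mul _ hB, Matrix.mul_one]
  have hdet : (Bᴴ * B + T).det = (Bᴴ * B).det * (1 + (B⁻¹)ᴴ * T * B⁻¹).det := by
    rw [hsplit, det_mul, det_mul, det_mul]
    ring
  rw [hdet]
  exact le_mul_of_one_le_right hS.det_nonneg (hT.conjTranspose_mul_mul_same _).one_le_det_one_add

theorem PosSemidef.det_le_det_toBlocks₁₁_mul_det_toBlocks₂₂ {M : Matrix (m ⊕ l) (m ⊕ l) 𝕜}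
    (hM : M.PosSemidef) : M.det ≤ M.toBlocks₁₁.det * M.toBlocks₂₂.det := by
  have hX : M.toBlocks₁₁.PosSemidef := hM.submatrix Sum.inl
  obtain hX0 | hX0 := eq_or_ne M.toBlocks₁₁.det 0
  · have hM0 : M.det = 0 := by
      by_contra h
      exact ((hM.posDef_iff_det_ne_zero.mpr h).submatrix Sum.inl_injective).det_pos.ne' hX0
    rw [hM0, hX0, zero_mul]
  have hXpd : M.toBlocks₁₁.PosDef := hX.posDef_iff_det_ne_zero.mpr hX0
  have := hXpd.isUnit.invertible
  obtain ⟨X, Y, W, rfl⟩ : ∃ X Y W, M = fromBlocks X Y Yᴴ W := by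
    have hMH := hM.1
    rw [← fromBlocks_toBlocks M, isHermitian_fromBlocks_iff] at hMH
    exact ⟨_, _, _, by rw [hMH.2.1, fromBlocks_toBlocks]⟩
  simp only [toBlocks_fromBlocks₁₁, toBlocks_fromBlocks₂₂] at hXpd this ⊢
  have hSchur : (W - Yᴴ * X⁻¹ * Y).PosSemidef := (hXpd.fromBlocks₁₁ Y W).mp hM
  rw [det_fromBlocks₁₁, invOf_eq_nonsing_inv]
  gcongr
  · exact hXpd.posSemidef.det_nonneg
  · simpa using hSchur.det_le_det_add (hXpd.inv.posSemidef.conjTranspose_mul_mul_same Y)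

open scoped MatrixOrder in
theorem PosSemidef.map_ofReal {A : Matrix m m ℝ} (hA : A.PosSemidef) :
    (A.map ((↑) : ℝ → 𝕜)).PosSemidef := by
  obtain ⟨B, rfl⟩ := CStarAlgebra.nonneg_iff_eq_star_mul_self.mp hA.nonneg
  have h := posSemidef_conjTranspose_mul_self (B.map ((↑) : ℝ → 𝕜))
  rwa [← conjTranspose_map _ (fun x ↦ (RCLike.conj_ofReal x).symm), ← Matrix.map_mul] at h

end Matrix

/-- The rows of `(wirtingerMatrix m)ᴴ` are `2 ∂/∂z` and `2 ∂/∂z̄` in the real coordinates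
`(x, y)` of `z = x + i y`. -/
def wirtingerMatrix (m : Type*) [DecidableEq m] : Matrix (m ⊕ m) (m ⊕ m) ℂ :=
  fromBlocks 1 1 (Complex.I • 1) (-Complex.I • 1)

section Wirtinger

variable {m : Type*} [Fintype m] [DecidableEq m]

theorem wirtingerMatrix_conjTranspose_mul_self :
    (wirtingerMatrix m)ᴴ * wirtingerMatrix m = (2 : ℂ) • 1 := by
  rw [wirtingerMatrix, fromBlocks_conjTranspose, fromBlocks_multiply, ← fromBlocks_one,
    fromBlocks_smul]
  simp [conjTranspose_smul, smul_smul, two_smul]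

theorem det_wirtingerMatrix_conj (M : Matrix (m ⊕ m) (m ⊕ m) ℂ) :
    ((wirtingerMatrix m)ᴴ * M * wirtingerMatrix m).det = 4 ^ Fintype.card m * M.det := by
  rw [det_mul, det_mul, mul_right_comm, ← det_mul, wirtingerMatrix_conjTranspose_mul_self,
    det_smul, det_one, Fintype.card_sum, ← two_mul, pow_mul]
  norm_num

theorem toBlocks₁₁_wirtingerMatrix_conj (P Q C S : Matrix m m ℝ) :
    ((wirtingerMatrix m)ᴴ * (fromBlocks P Q C S).map Complex.ofReal *
        wirtingerMatrix m).toBlocks₁₁ =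
      (P + S).map Complex.ofReal + Complex.I • (Q - C).map Complex.ofReal := by
  rw [wirtingerMatrix, fromBlocks_conjTranspose, fromBlocks_map, fromBlocks_multiply,
    fromBlocks_multiply, toBlocks_fromBlocks₁₁]
  ext i j
  simp [Complex.ext_iff, sub_eq_neg_add, add_comm]

theorem toBlocks₂₂_wirtingerMatrix_conj (P Q C S : Matrix m m ℝ) :
    ((wirtingerMatrix m)ᴴ * (fromBlocks P Q C S).map Complex.ofReal *
        wirtingerMatrix m).toBlocks₂₂ =
      (P + S).map Complex.ofReal - Complex.I • (Q - C).map Complex.ofReal := by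
  rw [wirtingerMatrix, fromBlocks_conjTranspose, fromBlocks_map, fromBlocks_multiply,
    fromBlocks_multiply, toBlocks_fromBlocks₂₂]
  ext i j
  simp [Complex.ext_iff, sub_eq_neg_add, add_comm]

theorem det_toBlocks₂₂_wirtingerMatrix_conj (P Q C S : Matrix m m ℝ) :
    ((wirtingerMatrix m)ᴴ * (fromBlocks P Q C S).map Complex.ofReal *
        wirtingerMatrix m).toBlocks₂₂.det =
      starRingEnd ℂ ((wirtingerMatrix m)ᴴ * (fromBlocks P Q C S).map Complex.ofReal *
        wirtingerMatrix m).toBlocks₁₁.det := by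
  rw [RingHom.map_det, toBlocks₁₁_wirtingerMatrix_conj, toBlocks₂₂_wirtingerMatrix_conj]
  congr 1
  ext i j
  simp [sub_eq_add_neg]

end Wirtinger

theorem inv_two_pow_mul_sqrt_le {n : ℕ} {a h : ℝ} (hh : 0 ≤ h)
    (ha : 4 ^ n * a ≤ (4 ^ n * h) ^ 2) : ((2 : ℝ) ^ n)⁻¹ * √a ≤ h := by
  have h4 : (4 : ℝ) ^ n = (2 ^ n) ^ 2 := by
    rw [← pow_mul, mul_comm, pow_mul]
    norm_num
  rw [h4] at ha
  rw [inv_mul_le_iff₀ (by positivity), Real.sqrt_le_left (by positivity)]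
  nlinarith [pow_pos (pow_pos (two_pos (α := ℝ)) n) 2]

theorem complex_real_hessian_det_comparison (n : ℕ)
    (P Q R : Matrix (Fin n) (Fin n) ℝ)
    (hA : (Matrix.fromBlocks P Q Qᵀ R).PosSemidef) :
    ((1 / 4 : ℂ) • ((P + R).map (Complex.ofReal) +
        Complex.I • ((Q - Qᵀ).map (Complex.ofReal)))).PosSemidef ∧
    ((1 / 4 : ℂ) • ((P + R).map (Complex.ofReal) +
        Complex.I • ((Q - Qᵀ).map (Complex.ofReal)))).det.im = 0 ∧
    0 ≤ ((1 / 4 : ℂ) • ((P + R).map (Complex.ofReal) +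
        Complex.I • ((Q - Qᵀ).map (Complex.ofReal)))).det.re ∧
    ((2 : ℝ) ^ n)⁻¹ * Real.sqrt (Matrix.fromBlocks P Q Qᵀ R).det ≤
      ((1 / 4 : ℂ) • ((P + R).map (Complex.ofReal) +
        Complex.I • ((Q - Qᵀ).map (Complex.ofReal)))).det.re := by
  set A := fromBlocks P Q Qᵀ R
  set H := (1 / 4 : ℂ) • ((P + R).map Complex.ofReal + Complex.I • (Q - Qᵀ).map Complex.ofReal)
  set B := (wirtingerMatrix (Fin n))ᴴ * A.map Complex.ofReal * wirtingerMatrix (Fin n)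
  have hB : B.PosSemidef := hA.map_ofReal.conjTranspose_mul_mul_same _
  have h₁₁ : B.toBlocks₁₁ = (4 : ℂ) • H := by
    rw [toBlocks₁₁_wirtingerMatrix_conj, smul_smul]
    norm_num
  have hH : H.PosSemidef := by
    rw [show H = (1 / 4 : ℂ) • B.toBlocks₁₁ by rw [toBlocks₁₁_wirtingerMatrix_conj]]
    exact (hB.submatrix Sum.inl).smul (by positivity)
  obtain ⟨hre, him⟩ := Complex.nonneg_iff.mp hH.det_nonneg
  refine ⟨hH, him.symm, hre, inv_two_pow_mul_sqrt_le hre ?_⟩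
  have hHdet : H.det = (H.det.re : ℂ) := Complex.ext rfl (by simp [← him])
  have hXdet : B.toBlocks₁₁.det = ((4 ^ n * H.det.re : ℝ) : ℂ) := by
    rw [h₁₁, det_smul, Fintype.card_fin, Complex.ofReal_mul, ← hHdet]
    norm_cast
  have hAdet : (A.map Complex.ofReal).det = A.det := (Complex.ofRealHom.map_det A).symm
  have hFischer := hB.det_le_det_toBlocks₁₁_mul_det_toBlocks₂₂
  rw [det_toBlocks₂₂_wirtingerMatrix_conj, hXdet, Complex.conj_ofReal, det_wirtingerMatrix_conj,
    hAdet, Fintype.card_fin] at hFischer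
  rw [sq]
  exact_mod_cast hFischer
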